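/- arXiv:1211.2611 — 2 statements merged into one kernel-verified Lean document; each statement's English description precedes it below -/
import Mathlib

section
/- Let b be a non-degenerate symmetric bilinear form of degree 0 on a finite-dimensional vector space V, (e_i) a basis of V and (e'_i) the basis determined by b(e'_j, e_i) = δ_{ij}. Then the bracket {Ω, Ω'} = Σ_i (ι_{e_i}Ω ⊙ ι_{e'_i}Ω') on cyclic multilinear forms is independent of the choice of basis (e_i). -/
open Finset

/-- The sign `(-1)^n` for an integer `n`. -/
def sgn (n : ℤ) : ℤ := if Even n then 1 else -1

/-- Koszul sign of a permutation `σ` with respect to degrees `d`: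
the product of `(-1)^(d i * d j)` over all inversions of `σ`. -/
def koszulSign {n : ℕ} (d : Fin n → ℤ) (σ : Equiv.Perm (Fin n)) : ℤ :=
  ∏ p ∈ Finset.univ.filter
      (fun p : Fin n × Fin n => p.1 < p.2 ∧ σ p.2 < σ p.1),
    sgn (d p.1 * d p.2)

variable {K V : Type*} [Field K]

/-- The action of a permutation on a multilinear form, with Koszul signs
computed from the (shifted) degrees of the arguments. -/
def permForm (deg : V → ℤ) {n : ℕ} (Ω : (Fin n → V) → K) (τ : Equiv.Perm (Fin n)) :
    (Fin n → V) → K :=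
  fun x => koszulSign (fun i => deg (x i)) τ • Ω (fun i => x (τ⁻¹ i))

/-- A form is cyclic if it is invariant (with Koszul signs) under the cyclic
permutation of its arguments. -/
def IsCyclicForm (deg : V → ℤ) {n : ℕ} (Ω : (Fin n → V) → K) : Prop :=
  permForm deg Ω (finRotate n) = Ω

/-- Cyclicization of a form: the sum over the cyclic subgroup. -/
def cyclicize (deg : V → ℤ) {n : ℕ} (Ω : (Fin n → V) → K) : (Fin n → V) → K :=
  fun x => ∑ j ∈ Finset.range n, permForm deg Ω ((finRotate n) ^ j) x

/-- Graded tensor product of forms, `bdeg` being the degree of the second form. -/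
def gtensor (deg : V → ℤ) {p q : ℕ} (bdeg : ℤ)
    (A : (Fin p → V) → K) (B : (Fin q → V) → K) : (Fin (p + q) → V) → K :=
  fun x =>
    sgn (bdeg * ∑ i : Fin p, deg (x (Fin.castAdd q i))) •
      (A (fun i => x (Fin.castAdd q i)) * B (fun j => x (Fin.natAdd p j)))

/-- The cyclic product `A ⊙ B = (A ⊗ B)^{Cycl}`. -/
def cyclProd (deg : V → ℤ) {p q : ℕ} (bdeg : ℤ)
    (A : (Fin p → V) → K) (B : (Fin q → V) → K) : (Fin (p + q) → V) → K :=
  cyclicize deg (gtensor deg bdeg A B)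

/-- Contraction `ι_v Ω`: insertion of `v` in the last argument. -/
def contr {n : ℕ} (Ω : (Fin (n + 1) → V) → K) (v : V) : (Fin n → V) → K :=
  fun x => Ω (Fin.snoc x v)

/-- Reindexing a form along an equality of arities. -/
def reForm {n m : ℕ} (h : n = m) (Ω : (Fin n → V) → K) : (Fin m → V) → K :=
  fun x => Ω (fun i => x (Fin.cast h i))


variable [AddCommGroup V] [Module K V]

/-- The trivial grading on an (ungraded) vector space. -/
def deg0 : V → ℤ := fun _ => 0

/-- A cyclic multilinear form. -/
def IsCyclicM {n : ℕ} (Ω : MultilinearMap K (fun _ : Fin n => V) K) : Prop :=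
  IsCyclicForm deg0 (fun x => Ω x)

/-- The bracket `{Ω,Ω'} = Σ_i ι_{e_i}Ω ⊙ ι_{e'_i}Ω'` computed in the basis `(e_i)`
with `b`-dual family `(e'_i)`. -/
def puPoint {m k k' : ℕ} (e e' : Fin m → V)
    (Ω : MultilinearMap K (fun _ : Fin (k + 1) => V) K)
    (Ω' : MultilinearMap K (fun _ : Fin (k' + 1) => V) K) :
    (Fin (k + k') → V) → K :=
  fun x => ∑ i : Fin m,
    cyclProd deg0 0 (contr (fun y => Ω y) (e i)) (contr (fun y => Ω' y) (e' i)) x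

/-!
With the trivial grading every Koszul sign is `1`, so at a fixed point `x` the summand
`ι_v Ω ⊙ ι_w Ω'` is a bilinear form `T` in `(v, w)`, and the bracket is `∑ i, T (e i) (e' i)`.
Such a sum does not depend on the basis: nondegeneracy of `b` gives
`f' i = ∑ j, b (f' i) (e j) • e' j`, and `b (f' i) y` is the `i`-th coordinate of `y` in `f`,
so `∑ i, b (f' i) (e j) • f i = e j`.
-/

section DualFamily

variable {R M N ι κ : Type*} [CommRing R] [AddCommGroup M] [Module R M]
  [AddCommGroup N] [Module R N] [Fintype ι] [DecidableEq ι] [Fintype κ] [DecidableEq κ]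
  (b : M →ₗ[R] M →ₗ[R] R)

theorem apply_dual_eq_repr (e : Module.Basis ι R M) {e' : ι → M}
    (he' : ∀ i j, b (e' j) (e i) = if i = j then 1 else 0) (i : ι) (v : M) :
    b (e' i) v = e.repr v i := by
  calc b (e' i) v = b (e' i) (∑ j, e.repr v j • e j) := by rw [e.sum_repr]
    _ = e.repr v i := by
      simp only [map_sum, map_smul, he', smul_eq_mul, mul_ite, mul_one, mul_zero,
        Finset.sum_ite_eq', Finset.mem_univ, if_true]

theorem sum_apply_dual_smul (e : Module.Basis ι R M) {e' : ι → M}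
    (he' : ∀ i j, b (e' j) (e i) = if i = j then 1 else 0) (v : M) :
    ∑ i, b (e' i) v • e i = v := by
  simp only [apply_dual_eq_repr b e he', e.sum_repr]

theorem eq_sum_apply_smul_dual (hnd : ∀ x, (∀ y, b x y = 0) → x = 0)
    (e : Module.Basis ι R M) {e' : ι → M}
    (he' : ∀ i j, b (e' j) (e i) = if i = j then 1 else 0) (v : M) :
    v = ∑ j, b v (e j) • e' j := by
  rw [← sub_eq_zero]
  have hb : b (v - ∑ j, b v (e j) • e' j) = 0 :=
    e.ext fun i => by simp [map_sum, he', mul_ite]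
  exact hnd _ fun y => by rw [hb, LinearMap.zero_apply]

theorem sum_apply_dual_eq (hnd : ∀ x, (∀ y, b x y = 0) → x = 0)
    (e : Module.Basis ι R M) (f : Module.Basis κ R M) {e' : ι → M} {f' : κ → M}
    (he' : ∀ i j, b (e' j) (e i) = if i = j then 1 else 0)
    (hf' : ∀ i j, b (f' j) (f i) = if i = j then 1 else 0)
    (T : M →ₗ[R] M →ₗ[R] N) :
    ∑ i, T (f i) (f' i) = ∑ j, T (e j) (e' j) :=
  calc ∑ i, T (f i) (f' i)
      = ∑ i, ∑ j, b (f' i) (e j) • T (f i) (e' j) := by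
        refine Finset.sum_congr rfl fun i _ => ?_
        conv_lhs => rw [eq_sum_apply_smul_dual b hnd e he' (f' i)]
        simp [map_sum, map_smul]
    _ = ∑ j, T (∑ i, b (f' i) (e j) • f i) (e' j) := by
        rw [Finset.sum_comm]
        simp [map_sum, map_smul]
    _ = ∑ j, T (e j) (e' j) := by
        simp only [sum_apply_dual_smul b f hf']

end DualFamily

/-- The summand `ι_v Ω ⊙ ι_w Ω'` of the bracket at `x`, as a bilinear form in `(v, w)`. -/
def cyclProdContr {k k' : ℕ} (Ω : MultilinearMap K (fun _ : Fin (k + 1) => V) K)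
    (Ω' : MultilinearMap K (fun _ : Fin (k' + 1) => V) K) (x : Fin (k + k') → V) :
    V →ₗ[K] V →ₗ[K] K :=
  ∑ j ∈ range (k + k'), (LinearMap.mul K K).compl₁₂
    (Ω.curryRight fun i => x ((finRotate (k + k') ^ j)⁻¹ (Fin.castAdd k' i)))
    (Ω'.curryRight fun i => x ((finRotate (k + k') ^ j)⁻¹ (Fin.natAdd k i)))

theorem cyclProd_contr_eq_cyclProdContr {k k' : ℕ} (Ω : MultilinearMap K (fun _ : Fin (k + 1) => V) K)
    (Ω' : MultilinearMap K (fun _ : Fin (k' + 1) => V) K) (v w : V) (x : Fin (k + k') → V) :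
    cyclProd deg0 0 (contr (fun y => Ω y) v) (contr (fun y => Ω' y) w) x
      = cyclProdContr Ω Ω' x v w := by
  simp [cyclProdContr, cyclProd, cyclicize, permForm, gtensor, koszulSign, deg0, sgn, contr,
    MultilinearMap.curryRight_apply]

theorem puBracket_basis_independent_general {n : ℕ}
    (b : V →ₗ[K] V →ₗ[K] K)
    (hnd : ∀ x, (∀ y, b x y = 0) → x = 0)
    (e : Module.Basis (Fin n) K V) (f : Module.Basis (Fin n) K V)
    (e' f' : Fin n → V)
    (he' : ∀ i j, b (e' j) (e i) = if i = j then 1 else 0)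
    (hf' : ∀ i j, b (f' j) (f i) = if i = j then 1 else 0)
    {k k' : ℕ}
    (Ω : MultilinearMap K (fun _ : Fin (k + 1) => V) K)
    (Ω' : MultilinearMap K (fun _ : Fin (k' + 1) => V) K) :
    puPoint (fun i => e i) e' Ω Ω' = puPoint (fun i => f i) f' Ω Ω' := by
  funext x
  simp only [puPoint, cyclProd_contr_eq_cyclProdContr]
  exact (sum_apply_dual_eq b hnd e f he' hf' (cyclProdContr Ω Ω' x)).symm

/-- The bracket `{Ω,Ω'} = Σ_i ι_{e_i}Ω ⊙ ι_{e'_i}Ω'`, where `(e_i)`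
is a basis of `V` and `(e'_i)` is determined by `b(e'_j, e_i) = δ_{ij}` for a
non-degenerate symmetric bilinear form `b`, does not depend on the choice of
the basis `(e_i)`. -/
theorem puBracket_basis_independent [FiniteDimensional K V] {n : ℕ}
    (b : V →ₗ[K] V →ₗ[K] K)
    (hsymm : ∀ x y, b x y = b y x)
    (hnd : ∀ x, (∀ y, b x y = 0) → x = 0)
    (e : Module.Basis (Fin n) K V) (f : Module.Basis (Fin n) K V)
    (e' f' : Fin n → V)
    (he' : ∀ i j, b (e' j) (e i) = if i = j then 1 else 0)
    (hf' : ∀ i j, b (f' j) (f i) = if i = j then 1 else 0)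
    {k k' : ℕ}
    (Ω : MultilinearMap K (fun _ : Fin (k + 1) => V) K)
    (Ω' : MultilinearMap K (fun _ : Fin (k' + 1) => V) K)
    (hΩ : IsCyclicM Ω) (hΩ' : IsCyclicM Ω') :
    puPoint (fun i => e i) e' Ω Ω' = puPoint (fun i => f i) f' Ω Ω' :=
  puBracket_basis_independent_general b hnd e f e' f' he' hf' Ω Ω'
end

section
/- Let (V,q) be a Lie algebra and M a finite-dimensional V-module. Then Ṽ = V × M × V* × M* with bracket q̃((x,a,g,h),(x',a',g',h')) = ([x,x'], x·a' − x'·a, x·g' − x'·g + a·h' − a'·h, x·h' − x'·h) is a Lie algebra, the bilinear form b̃((x,a,g,h),(x',a',g',h')) = g(x') + h(a') + g'(x) + h'(a) is symmetric, non-degenerate and invariant (b̃(q̃(u,v),w) = b̃(u,q̃(v,w))), so (Ṽ, b̃, q̃) is a quadratic Lie algebra. -/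
open LinearMap

attribute [local instance 100] LieRing.ofAssociativeRing

variable {K V M : Type*} [Field K]
  [LieRing V] [LieAlgebra K V]
  [AddCommGroup M] [Module K M] [LieRingModule V M] [LieModule K V M]

/-- The double semi-direct product `Ṽ = V × M × V* × M*` of a Lie algebra `V`
by a module `M`. -/
abbrev LieDblExt (K V M : Type*) [Field K] [LieRing V] [LieAlgebra K V]
    [AddCommGroup M] [Module K M] :=
  V × M × Module.Dual K V × Module.Dual K M

/-- The bracket
`q̃((x,a,g,h),(x',a',g',h')) = ([x,x'], x·a' − x'·a,
  x·g' − x'·g + a·h' − a'·h, x·h' − x'·h)` on `Ṽ = V × M × V* × M*`, where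
`(x·g)(z) = g([z,x])`, `(a·h)(z) = h([z,a])` and `(x·h)(c) = −h([x,c])`. -/
def qLie (u v : LieDblExt K V M) : LieDblExt K V M :=
  (⁅u.1, v.1⁆,
   ⁅u.1, v.2.1⁆ - ⁅v.1, u.2.1⁆,
   v.2.2.1 ∘ₗ (-(LieAlgebra.ad K V u.1 : V →ₗ[K] V))
     - u.2.2.1 ∘ₗ (-(LieAlgebra.ad K V v.1 : V →ₗ[K] V))
     + v.2.2.2 ∘ₗ ((LieModule.toEnd K V M).toLinearMap.flip u.2.1)
     - u.2.2.2 ∘ₗ ((LieModule.toEnd K V M).toLinearMap.flip v.2.1),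
   - (v.2.2.2 ∘ₗ (LieModule.toEnd K V M u.1 : M →ₗ[K] M))
     + u.2.2.2 ∘ₗ (LieModule.toEnd K V M v.1 : M →ₗ[K] M))

/-- The bilinear form
`b̃((x,a,g,h),(x',a',g',h')) = g(x') + h(a') + g'(x) + h'(a)`. -/
def bLie (u v : LieDblExt K V M) : K :=
  u.2.2.1 v.1 + u.2.2.2 v.2.1 + v.2.2.1 u.1 + v.2.2.2 u.2.1

/-! `Ṽ` is the semidirect product `W ⋉ W*` of `W = V ⋉ M` with its coadjoint module, and `b̃` is
the canonical pairing of `W` with `W*`. Invariance of `b̃` is the definition of the coadjoint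
action, and `b̃` is non-degenerate because a vector space is separated by its dual. The Jacobi
identity holds componentwise: once the components of `q̃` are written as actions on the point
where a functional is evaluated, every component of the Jacobiator is a sum of instances of the
Leibniz rule `⁅⁅x, y⁆, m⁆ = ⁅x, ⁅y, m⁆⁆ - ⁅y, ⁅x, m⁆⁆`, except the `V`-component, which is the
Jacobi identity of `V`. -/

lemma lie_lie_add_lie_lie_add_lie_lie {L : Type*} [LieRing L] (x y z : L) :
    ⁅⁅x, y⁆, z⁆ + ⁅⁅y, z⁆, x⁆ + ⁅⁅z, x⁆, y⁆ = 0 := by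
  rw [← lie_skew ⁅x, y⁆ z, ← lie_skew ⁅y, z⁆ x, ← lie_skew ⁅z, x⁆ y, ← neg_zero,
    ← lie_jacobi z x y]
  abel

@[simp]
lemma qLie_fst (u v : LieDblExt K V M) : (qLie u v).1 = ⁅u.1, v.1⁆ := rfl

@[simp]
lemma qLie_snd_fst (u v : LieDblExt K V M) :
    (qLie u v).2.1 = ⁅u.1, v.2.1⁆ - ⁅v.1, u.2.1⁆ := rfl

@[simp]
lemma qLie_snd_snd_fst_apply (u v : LieDblExt K V M) (z : V) :
    (qLie u v).2.2.1 z =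
      u.2.2.1 ⁅v.1, z⁆ - v.2.2.1 ⁅u.1, z⁆ + v.2.2.2 ⁅z, u.2.1⁆ - u.2.2.2 ⁅z, v.2.1⁆ := by
  simp [qLie, LieModule.toEnd_apply_apply]
  abel

@[simp]
lemma qLie_snd_snd_snd_apply (u v : LieDblExt K V M) (c : M) :
    (qLie u v).2.2.2 c = u.2.2.2 ⁅v.1, c⁆ - v.2.2.2 ⁅u.1, c⁆ := by
  simp [qLie, LieModule.toEnd_apply_apply]
  abel

lemma qLie_skew (u v : LieDblExt K V M) : -qLie v u = qLie u v := by
  ext <;> simp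
  abel

lemma qLie_jacobi (u v w : LieDblExt K V M) :
    qLie (qLie u v) w + qLie (qLie v w) u + qLie (qLie w u) v = 0 := by
  ext z
  · exact lie_lie_add_lie_lie_add_lie_lie u.1 v.1 w.1
  all_goals
    simp only [Prod.fst_add, Prod.snd_add, Prod.fst_zero, Prod.snd_zero, LinearMap.add_apply,
      LinearMap.zero_apply, qLie_fst, qLie_snd_fst, qLie_snd_snd_fst_apply,
      qLie_snd_snd_snd_apply, map_sub, lie_sub, lie_lie]
    abel

omit [LieRingModule V M] [LieModule K V M] in
lemma bLie_comm (u v : LieDblExt K V M) : bLie u v = bLie v u := by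
  simp only [bLie]
  abel

omit [LieRingModule V M] [LieModule K V M] in
lemma eq_zero_of_forall_bLie_eq_zero (u : LieDblExt K V M) (hu : ∀ v, bLie u v = 0) :
    u = 0 := by
  obtain ⟨x, a, g, h⟩ := u
  have hx : x = 0 := (Module.forall_dual_apply_eq_zero_iff K x).mp fun φ => by
    simpa [bLie] using hu (0, 0, φ, 0)
  have ha : a = 0 := (Module.forall_dual_apply_eq_zero_iff K a).mp fun ψ => by
    simpa [bLie] using hu (0, 0, 0, ψ)
  have hg : g = 0 := LinearMap.ext fun y => by simpa [bLie] using hu (y, 0, 0, 0)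
  have hh : h = 0 := LinearMap.ext fun c => by simpa [bLie] using hu (0, c, 0, 0)
  simp [hx, ha, hg, hh]

lemma bLie_qLie_assoc (u v w : LieDblExt K V M) :
    bLie (qLie u v) w = bLie u (qLie v w) := by
  simp only [bLie, qLie_fst, qLie_snd_fst, qLie_snd_snd_fst_apply, qLie_snd_snd_snd_apply,
    map_sub]
  rw [← lie_skew u.1 v.1, ← lie_skew u.1 w.1, ← lie_skew v.1 w.1]
  simp only [map_neg]
  abel

theorem double_semidirect_product_quadratic_Lie_general :
    (∀ u v : LieDblExt K V M, qLie u v = - qLie v u) ∧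
    (∀ u v w : LieDblExt K V M,
        qLie (qLie u v) w + qLie (qLie v w) u + qLie (qLie w u) v = 0) ∧
    (∀ u v : LieDblExt K V M, bLie u v = bLie v u) ∧
    (∀ u : LieDblExt K V M, (∀ v, bLie u v = 0) → u = 0) ∧
    (∀ u v w : LieDblExt K V M, bLie (qLie u v) w = bLie u (qLie v w)) :=
  ⟨fun u v => (qLie_skew u v).symm, qLie_jacobi, bLie_comm, eq_zero_of_forall_bLie_eq_zero,
    bLie_qLie_assoc⟩

/-- For a Lie algebra `V` and a finite-dimensional module `M`,
`Ṽ = V × M × V* × M*` with the bracket `q̃` is a Lie algebra, and `b̃` is a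
symmetric, non-degenerate, invariant bilinear form: `(Ṽ, b̃, q̃)` is a quadratic
Lie algebra. -/
theorem double_semidirect_product_quadratic_Lie
    [FiniteDimensional K V] [FiniteDimensional K M] :
    (∀ u v : LieDblExt K V M, qLie u v = - qLie v u) ∧
    (∀ u v w : LieDblExt K V M,
        qLie (qLie u v) w + qLie (qLie v w) u + qLie (qLie w u) v = 0) ∧
    (∀ u v : LieDblExt K V M, bLie u v = bLie v u) ∧
    (∀ u : LieDblExt K V M, (∀ v, bLie u v = 0) → u = 0) ∧
    (∀ u v w : LieDblExt K V M, bLie (qLie u v) w = bLie u (qLie v w)) :=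
  double_semidirect_product_quadratic_Lie_general
end
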